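/- arXiv:math/0301157 — 2 statements merged into one kernel-verified Lean document; each statement's English description precedes it below -/
import Mathlib

section
/- Let p, q be real numbers and let k be a positive integer such that V_k(p,q)² − 4q^k ≠ 0. Then for every n ≥ 5, s_6(n; p,q; k) = (U_k(p,q)⁵/(120·(V_k(p,q)² − 4q^k)⁵)) · (V_k(p,q)⁵·(n−1)(n−2)(n−3)(n−4)(n−5)·U_{n·k}(p,q) − 10q^k·V_k(p,q)⁴·(n−2)(n−3)(n−4)(n−5)(n+2)·U_{(n−1)·k}(p,q) + 20q^(2k)·V_k(p,q)³·(n−3)(n−4)(n−5)(2n²+6n+1)·U_{(n−2)·k}(p,q) − 40q^(3k)·V_k(p,q)²·(n−4)(n−5)(n+1)(2n²+4n−9)·U_{(n−3)·k}(p,q) + 80q^(4k)·V_k(p,q)·(n−5)(n⁴+2n³−10n²−11n+9)·U_{(n−4)·k}(p,q) − 32q^(5k)·n(n−4)(n−2)(n+2)(n+4)·U_{(n−5)·k}(p,q)). -/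
/-- The generalized Fibonacci sequence: `U 0 = 0`, `U 1 = 1`,
`U (n+2) = p * U (n+1) - q * U n`. -/
def genU (p q : ℝ) : ℕ → ℝ
  | 0 => 0
  | 1 => 1
  | (n + 2) => p * genU p q (n + 1) - q * genU p q n

/-- The generalized Lucas sequence: `V 0 = 2`, `V 1 = p`,
`V (n+2) = p * V (n+1) - q * V n`. -/
def genV (p q : ℝ) : ℕ → ℝ
  | 0 => 2
  | 1 => p
  | (n + 2) => p * genV p q (n + 1) - q * genV p q n

/-- `s_d(n; p, q; k) = ∑_{j₁ + ⋯ + j_d = n} ∏_{i=1}^{d} U_{k jᵢ}(p, q)`,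
the sum being over `d`-tuples of nonnegative integers. -/
def sgen (p q : ℝ) (k d n : ℕ) : ℝ :=
  ∑ t ∈ Finset.Nat.antidiagonalTuple d n, ∏ i, genU p q (k * t i)

section
variable (p q : ℝ) (k : ℕ)
variable (p q : ℝ) (k : ℕ)

lemma genU0 : genU p q 0 = 0 := rfl
lemma genU1 : genU p q 1 = 1 := rfl
lemma genUr (n : ℕ) : genU p q (n+2) = p * genU p q (n+1) - q * genU p q n := rfl
lemma genVr (n : ℕ) : genV p q (n+2) = p * genV p q (n+1) - q * genV p q n := rfl
lemma genU2 : genU p q 2 = p := by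
  have h : genU p q 2 = p * genU p q 1 - q * genU p q 0 := rfl
  rw [h, genU0, genU1]; ring

lemma genU_add (m : ℕ) : ∀ n, genU p q (m+n+1) =
    genU p q (m+1) * genU p q (n+1) - q * genU p q m * genU p q n := by
  have key : ∀ n, (genU p q (m+n+1) =
      genU p q (m+1) * genU p q (n+1) - q * genU p q m * genU p q n) ∧
      (genU p q (m+n+2) =
      genU p q (m+1) * genU p q (n+2) - q * genU p q m * genU p q (n+1)) := by
    intro n
    induction n with
    | zero =>
      constructor
      · show genU p q (m+1) = genU p q (m+1) * genU p q 1 - q * genU p q m * genU p q 0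
        rw [genU0, genU1]; ring
      · show genU p q (m+2) = genU p q (m+1) * genU p q 2 - q * genU p q m * genU p q 1
        rw [genUr, genU2, genU1]; ring
    | succ n ih =>
      refine ⟨ih.2, ?_⟩
      show genU p q (m+n+3) = genU p q (m+1) * genU p q (n+3) - q * genU p q m * genU p q (n+2)
      have ha : genU p q (m+n+3) = p * genU p q (m+n+2) - q * genU p q (m+n+1) :=
        genUr p q (m+n+1)
      have ih2 : genU p q (m+n+2) =
          genU p q (m+1) * genU p q (n+2) - q * genU p q m * genU p q (n+1) := ih.2
      have hb : genU p q (n+3) = p * genU p q (n+2) - q * genU p q (n+1) := genUr p q (n+1)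
      rw [ha, ih2, ih.1, hb, genUr p q n]; ring
  exact fun n => (key n).1

lemma genV_eq : ∀ n, genV p q (n+1) = genU p q (n+2) - q * genU p q n := by
  have key : ∀ n, (genV p q (n+1) = genU p q (n+2) - q * genU p q n) ∧
      (genV p q (n+2) = genU p q (n+3) - q * genU p q (n+1)) := by
    intro n
    induction n with
    | zero =>
      constructor
      · show genV p q 1 = genU p q 2 - q * genU p q 0
        rw [genU2, genU0]; show p = p - q * 0; ring
      · show genV p q 2 = genU p q 3 - q * genU p q 1
        have h1 : genV p q 2 = p * genV p q 1 - q * genV p q 0 := rfl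
        have h2 : genU p q 3 = p * genU p q 2 - q * genU p q 1 := genUr p q 1
        rw [h1, h2, genU2, genU1]
        show p * p - q * 2 = p * p - q * 1 - q * 1; ring
    | succ n ih =>
      refine ⟨ih.2, ?_⟩
      show genV p q (n+3) = genU p q (n+4) - q * genU p q (n+2)
      have hA : genV p q (n+3) = p * genV p q (n+2) - q * genV p q (n+1) := genVr p q (n+1)
      have ih2 : genV p q (n+2) = genU p q (n+3) - q * genU p q (n+1) := ih.2
      have hB : genU p q (n+4) = p * genU p q (n+3) - q * genU p q (n+2) := genUr p q (n+2)
      have hC : genU p q (n+3) = p * genU p q (n+2) - q * genU p q (n+1) := genUr p q (n+1)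
      rw [hA, ih2, ih.1, hB, hC, genUr p q n]; ring
  exact fun n => (key n).1

lemma docg : ∀ k m : ℕ, genU p q (m+k) * genU p q (k+1) - genU p q k * genU p q (m+k+1)
    = q^k * genU p q m := by
  intro k
  induction k with
  | zero =>
    intro m
    show genU p q (m+0) * genU p q 1 - genU p q 0 * genU p q (m+1) = q^0 * genU p q m
    rw [genU0, genU1]
    show genU p q m * 1 - 0 * genU p q (m+1) = q^0 * genU p q m
    ring
  | succ k ih =>
    intro m
    have h := ih m
    show genU p q (m+k+1) * genU p q (k+2) - genU p q (k+1) * genU p q (m+k+2)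
      = q^(k+1) * genU p q m
    rw [genUr p q k, genUr p q (m+k), pow_succ]
    linear_combination q * h

lemma genU_key (k : ℕ) (hk : 1 ≤ k) (m : ℕ) :
    genU p q (m+2*k) = genV p q k * genU p q (m+k) - q^k * genU p q m := by
  obtain ⟨j, rfl⟩ : ∃ j, k = j + 1 := ⟨k - 1, by omega⟩
  show genU p q (m+2*j+2) = genV p q (j+1) * genU p q (m+j+1) - q^(j+1) * genU p q m
  have h1 : genU p q (m+2*j+2) =
      genU p q (m+j+1) * genU p q (j+2) - q * genU p q (m+j) * genU p q (j+1) := by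
    have := genU_add p q (m+j) (j+1)
    rw [show m+j+(j+1)+1 = m+2*j+2 from by omega, show j+1+1 = j+2 from rfl] at this
    exact this
  have h2 : genV p q (j+1) = genU p q (j+2) - q * genU p q j := genV_eq p q j
  have h3 : genU p q (m+j) * genU p q (j+1) - genU p q j * genU p q (m+j+1)
      = q^j * genU p q m := docg p q j m
  rw [h1, h2, pow_succ']
  linear_combination (-q) * h3


lemma sgen_conv (d n : ℕ) : sgen p q k (d+1) n =
    ∑ ij ∈ Finset.HasAntidiagonal.antidiagonal n, genU p q (k * ij.1) * sgen p q k d ij.2 := by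
  rw [sgen]
  simp only [sgen, Finset.mul_sum]
  rw [Finset.sum_sigma']
  refine Finset.sum_bij' (fun t _ => ⟨(t 0, ∑ i, Fin.tail t i), Fin.tail t⟩)
    (fun x _ => Fin.cons x.1.1 x.2) ?_ ?_ ?_ ?_ ?_
  · intro t ht
    rw [Finset.Nat.mem_antidiagonalTuple] at ht
    simp only [Finset.mem_sigma, Finset.HasAntidiagonal.mem_antidiagonal, Finset.Nat.mem_antidiagonalTuple]
    refine ⟨?_, trivial⟩
    rw [← ht, Fin.sum_univ_succ]
    rfl
  · intro x hx
    simp only [Finset.mem_sigma, Finset.HasAntidiagonal.mem_antidiagonal,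
      Finset.Nat.mem_antidiagonalTuple] at hx
    rw [Finset.Nat.mem_antidiagonalTuple, Fin.sum_cons, hx.2, hx.1]
  · intro t ht
    exact Fin.cons_self_tail t
  · rintro ⟨⟨a,b⟩,t⟩ hx
    simp only [Finset.mem_sigma, Finset.HasAntidiagonal.mem_antidiagonal,
      Finset.Nat.mem_antidiagonalTuple] at hx
    dsimp only
    have h1 : Fin.tail (Fin.cons a t : Fin (d+1) → ℕ) = t := rfl
    have h2 : (Fin.cons a t : Fin (d+1) → ℕ) 0 = a := rfl
    rw [h1, h2, hx.2]
  · intro t ht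
    rw [Fin.prod_univ_succ]
    rfl

lemma sgen_conv' (d n : ℕ) : sgen p q k (d+1) n =
    ∑ i ∈ Finset.range (n+1), sgen p q k d i * genU p q (k * (n - i)) := by
  rw [sgen_conv]
  rw [← Finset.HasAntidiagonal.map_swap_antidiagonal, Finset.sum_map]
  rw [Finset.Nat.sum_antidiagonal_eq_sum_range_succ_mk]
  simp [mul_comm]

lemma sgen_zero_zero : sgen p q k 0 0 = 1 := by
  simp [sgen]

lemma sgen_zero_succ (n : ℕ) : sgen p q k 0 (n+1) = 0 := by
  simp [sgen]

lemma sgen_one (n : ℕ) : sgen p q k 1 n = genU p q (k * n) := by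
  simp [sgen, Finset.Nat.antidiagonalTuple_one]

lemma sgen_eq_zero {d n : ℕ} (h : n < d) : sgen p q k d n = 0 := by
  rw [sgen]
  refine Finset.sum_eq_zero fun t ht => ?_
  rw [Finset.Nat.mem_antidiagonalTuple] at ht
  by_cases hz : ∃ i, t i = 0
  · obtain ⟨i, hi⟩ := hz
    refine Finset.prod_eq_zero (Finset.mem_univ i) ?_
    rw [hi, Nat.mul_zero]; rfl
  · push_neg at hz
    exfalso
    have : d ≤ ∑ i, t i := by
      calc d = ∑ _i : Fin d, 1 := by simp
      _ ≤ ∑ i, t i := Finset.sum_le_sum fun i _ => Nat.one_le_iff_ne_zero.2 (hz i)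
    omega

lemma sgen_self (d : ℕ) : sgen p q k d d = (genU p q k)^d := by
  induction d with
  | zero => simpa using sgen_zero_zero p q k
  | succ d ih =>
    rw [sgen_conv', Finset.sum_range_succ, Finset.sum_range_succ]
    have h1 : ∀ i ∈ Finset.range d, sgen p q k d i * genU p q (k * (d + 1 - i)) = 0 := by
      intro i hi
      rw [Finset.mem_range] at hi
      rw [sgen_eq_zero p q k hi, zero_mul]
    rw [Finset.sum_eq_zero h1, ih]
    have e1 : d + 1 - d = 1 := by omega
    have e2 : d + 1 - (d + 1) = 0 := by omega
    rw [e1, e2, Nat.mul_zero, Nat.mul_one]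
    show _ + _ * genU p q 0 = _
    rw [show genU p q 0 = 0 from rfl, pow_succ]
    ring

end

noncomputable def rhs2 (p q : ℝ) (k m : ℕ) : ℝ :=
  (genU p q k)^1 / (1 * ((genV p q k)^2 - 4*q^k)^1) *
  ( genV p q k * ((1:ℝ)*(m:ℝ)) * genU p q (k*(m+1))
 - q^k * ((2:ℝ) + (2:ℝ)*(m:ℝ)) * genU p q (k*m) )

noncomputable def rhs3 (p q : ℝ) (k m : ℕ) : ℝ :=
  (genU p q k)^2 / (2 * ((genV p q k)^2 - 4*q^k)^2) *
  ( (genV p q k)^2 * ((1:ℝ)*(m:ℝ) + (1:ℝ)*(m:ℝ)^2) * genU p q (k*(m+2))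
 - q^k * genV p q k * ((10:ℝ)*(m:ℝ) + (4:ℝ)*(m:ℝ)^2) * genU p q (k*(m+1))
 + (q^k)^2 * ((12:ℝ) + (16:ℝ)*(m:ℝ) + (4:ℝ)*(m:ℝ)^2) * genU p q (k*m) )

noncomputable def rhs4 (p q : ℝ) (k m : ℕ) : ℝ :=
  (genU p q k)^3 / (6 * ((genV p q k)^2 - 4*q^k)^3) *
  ( (genV p q k)^3 * ((2:ℝ)*(m:ℝ) + (3:ℝ)*(m:ℝ)^2 + (1:ℝ)*(m:ℝ)^3) * genU p q (k*(m+3))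
 - q^k * (genV p q k)^2 * ((24:ℝ)*(m:ℝ) + (30:ℝ)*(m:ℝ)^2 + (6:ℝ)*(m:ℝ)^3) * genU p q (k*(m+2))
 + (q^k)^2 * genV p q k * ((132:ℝ)*(m:ℝ) + (84:ℝ)*(m:ℝ)^2 + (12:ℝ)*(m:ℝ)^3) * genU p q (k*(m+1))
 - (q^k)^3 * ((120:ℝ) + (184:ℝ)*(m:ℝ) + (72:ℝ)*(m:ℝ)^2 + (8:ℝ)*(m:ℝ)^3) * genU p q (k*m) )

noncomputable def rhs5 (p q : ℝ) (k m : ℕ) : ℝ :=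
  (genU p q k)^4 / (24 * ((genV p q k)^2 - 4*q^k)^4) *
  ( (genV p q k)^4 * ((6:ℝ)*(m:ℝ) + (11:ℝ)*(m:ℝ)^2 + (6:ℝ)*(m:ℝ)^3 + (1:ℝ)*(m:ℝ)^4) * genU p q (k*(m+4))
 - q^k * (genV p q k)^3 * ((88:ℝ)*(m:ℝ) + (148:ℝ)*(m:ℝ)^2 + (68:ℝ)*(m:ℝ)^3 + (8:ℝ)*(m:ℝ)^4) * genU p q (k*(m+3))
 + (q^k)^2 * (genV p q k)^2 * ((564:ℝ)*(m:ℝ) + (804:ℝ)*(m:ℝ)^2 + (264:ℝ)*(m:ℝ)^3 + (24:ℝ)*(m:ℝ)^4) * genU p q (k*(m+2))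
 - (q^k)^3 * genV p q k * ((2232:ℝ)*(m:ℝ) + (1792:ℝ)*(m:ℝ)^2 + (432:ℝ)*(m:ℝ)^3 + (32:ℝ)*(m:ℝ)^4) * genU p q (k*(m+1))
 + (q^k)^4 * ((1680:ℝ) + (2816:ℝ)*(m:ℝ) + (1376:ℝ)*(m:ℝ)^2 + (256:ℝ)*(m:ℝ)^3 + (16:ℝ)*(m:ℝ)^4) * genU p q (k*m) )

noncomputable def rhs6 (p q : ℝ) (k m : ℕ) : ℝ :=
  (genU p q k)^5 / (120 * ((genV p q k)^2 - 4*q^k)^5) *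
  ( (genV p q k)^5 * ((24:ℝ)*(m:ℝ) + (50:ℝ)*(m:ℝ)^2 + (35:ℝ)*(m:ℝ)^3 + (10:ℝ)*(m:ℝ)^4 + (1:ℝ)*(m:ℝ)^5) * genU p q (k*(m+5))
 - q^k * (genV p q k)^4 * ((420:ℝ)*(m:ℝ) + (830:ℝ)*(m:ℝ)^2 + (530:ℝ)*(m:ℝ)^3 + (130:ℝ)*(m:ℝ)^4 + (10:ℝ)*(m:ℝ)^5) * genU p q (k*(m+4))
 + (q^k)^2 * (genV p q k)^3 * ((3240:ℝ)*(m:ℝ) + (5900:ℝ)*(m:ℝ)^2 + (3260:ℝ)*(m:ℝ)^3 + (640:ℝ)*(m:ℝ)^4 + (40:ℝ)*(m:ℝ)^5) * genU p q (k*(m+3))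
 - (q^k)^3 * (genV p q k)^2 * ((14640:ℝ)*(m:ℝ) + (22840:ℝ)*(m:ℝ)^2 + (9640:ℝ)*(m:ℝ)^3 + (1520:ℝ)*(m:ℝ)^4 + (80:ℝ)*(m:ℝ)^5) * genU p q (k*(m+2))
 + (q^k)^4 * genV p q k * ((46320:ℝ)*(m:ℝ) + (43120:ℝ)*(m:ℝ)^2 + (13600:ℝ)*(m:ℝ)^3 + (1760:ℝ)*(m:ℝ)^4 + (80:ℝ)*(m:ℝ)^5) * genU p q (k*(m+1))
 - (q^k)^5 * ((30240:ℝ) + (54048:ℝ)*(m:ℝ) + (30400:ℝ)*(m:ℝ)^2 + (7360:ℝ)*(m:ℝ)^3 + (800:ℝ)*(m:ℝ)^4 + (32:ℝ)*(m:ℝ)^5) * genU p q (k*m) )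

section
variable (p q : ℝ) (k : ℕ)
lemma urec (hk : 1 ≤ k) (m : ℕ) : genU p q (k*(m+2)) =
    genV p q k * genU p q (k*(m+1)) - q^k * genU p q (k*m) := by
  have h := genU_key p q k hk (k*m)
  rw [show k*m+2*k = k*(m+2) from by ring, show k*m+k = k*(m+1) from by ring] at h
  exact h

lemma srec (hk : 1 ≤ k) (d n : ℕ) :
    sgen p q k (d+1) (n+2) = genV p q k * sgen p q k (d+1) (n+1)
      - q^k * sgen p q k (d+1) n + genU p q k * sgen p q k d (n+1) := by
  have hL : sgen p q k (d+1) (n+2) =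
      (∑ i ∈ Finset.range (n+1), sgen p q k d i * genU p q (k*(n+2-i)))
        + sgen p q k d (n+1) * genU p q k := by
    rw [sgen_conv' p q k d (n+2), Finset.sum_range_succ,
      show Finset.range (n+2) = Finset.range (n+1+1) from rfl, Finset.sum_range_succ]
    have e1 : n+2-(n+1) = 1 := by omega
    have e0 : n+2-(n+2) = 0 := by omega
    rw [e1, e0, Nat.mul_one, Nat.mul_zero, genU0, mul_zero, add_zero]
  have hM : sgen p q k (d+1) (n+1) =
      ∑ i ∈ Finset.range (n+1), sgen p q k d i * genU p q (k*(n+1-i)) := by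
    rw [sgen_conv' p q k d (n+1), Finset.sum_range_succ]
    have e0 : n+1-(n+1) = 0 := by omega
    rw [e0, Nat.mul_zero, genU0, mul_zero, add_zero]
  have hN : sgen p q k (d+1) n =
      ∑ i ∈ Finset.range (n+1), sgen p q k d i * genU p q (k*(n-i)) := sgen_conv' p q k d n
  have hsum : (∑ i ∈ Finset.range (n+1), sgen p q k d i * genU p q (k*(n+2-i)))
      = genV p q k * (∑ i ∈ Finset.range (n+1), sgen p q k d i * genU p q (k*(n+1-i)))
        - q^k * ∑ i ∈ Finset.range (n+1), sgen p q k d i * genU p q (k*(n-i)) := by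
    rw [Finset.mul_sum, Finset.mul_sum, ← Finset.sum_sub_distrib]
    refine Finset.sum_congr rfl fun i hi => ?_
    rw [Finset.mem_range] at hi
    have e2 : n+2-i = (n-i)+2 := by omega
    have e1 : n+1-i = (n-i)+1 := by omega
    rw [e2, e1, urec p q k hk (n-i)]
    ring
  rw [hL, hM, hN, hsum]; ring


lemma closed2 (hk : 1 ≤ k) (hV : (genV p q k)^2 - 4*q^k ≠ 0) :
    ∀ m : ℕ, sgen p q k 2 (m+1) = rhs2 p q k m := by
  have key : ∀ m : ℕ, (sgen p q k 2 (m+1) = rhs2 p q k m) ∧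
      (sgen p q k 2 (m+1+1) = rhs2 p q k (m+1)) := by
    intro m
    induction m with
    | zero =>
      simp only [Nat.zero_add]
      constructor
      · have h0 : sgen p q k 2 1 = 0 := sgen_eq_zero p q k (by omega)
        rw [h0, rhs2]
        simp only [Nat.zero_add]
        have w0 : genU p q (k*0) = 0 := genU0 p q
        have w1 : genU p q (k*1) = genU p q k := by rw [Nat.mul_one]
        rw [w1, w0]
        push_cast
        field_simp
        try ring
      · have h1 : sgen p q k 2 (1+1) = (genU p q k)^2 := sgen_self p q k 2
        rw [h1, rhs2]
        simp only [show (1:ℕ)+1 = 2 from rfl]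
        have w0 : genU p q (k*0) = 0 := genU0 p q
        have w1 : genU p q (k*1) = genU p q k := by rw [Nat.mul_one]
        have w2 : genU p q (k*2) = genV p q k * genU p q (k*1) - q^k * genU p q (k*0) := urec p q k hk 0
        rw [w2, w1, w0]
        push_cast
        field_simp
        try ring
    | succ m ih =>
      refine ⟨ih.2, ?_⟩
      simp only [show m+1+1 = m+2 from rfl]
      have hs : sgen p q k 2 (m+2+1) = genV p q k * sgen p q k 2 (m+1+1)
          - q^k * sgen p q k 2 (m+1) + genU p q k * sgen p q k 1 (m+1+1) :=
        srec p q k hk 1 (m+1)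
      have hprev : sgen p q k 1 (m+1+1) = genU p q (k*(m+2)) := sgen_one p q k (m+2)
      rw [hs, ih.1, ih.2, hprev]
      simp only [rhs2]
      simp only [show m+1+1 = m+2 from rfl, show m+2+1 = m+3 from rfl]
      have u3 : genU p q (k*(m+3)) = genV p q k * genU p q (k*(m+2)) - q^k * genU p q (k*(m+1)) := urec p q k hk (m+1)
      have u2 : genU p q (k*(m+2)) = genV p q k * genU p q (k*(m+1)) - q^k * genU p q (k*m) := urec p q k hk (m)
      rw [u3, u2]
      push_cast
      field_simp
      ring
  exact fun m => (key m).1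

lemma closed3 (hk : 1 ≤ k) (hV : (genV p q k)^2 - 4*q^k ≠ 0) :
    ∀ m : ℕ, sgen p q k 3 (m+2) = rhs3 p q k m := by
  have key : ∀ m : ℕ, (sgen p q k 3 (m+2) = rhs3 p q k m) ∧
      (sgen p q k 3 (m+1+2) = rhs3 p q k (m+1)) := by
    intro m
    induction m with
    | zero =>
      simp only [Nat.zero_add]
      constructor
      · have h0 : sgen p q k 3 2 = 0 := sgen_eq_zero p q k (by omega)
        rw [h0, rhs3]
        simp only [Nat.zero_add]
        have w0 : genU p q (k*0) = 0 := genU0 p q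
        have w1 : genU p q (k*1) = genU p q k := by rw [Nat.mul_one]
        have w2 : genU p q (k*2) = genV p q k * genU p q (k*1) - q^k * genU p q (k*0) := urec p q k hk 0
        rw [w2, w1, w0]
        push_cast
        field_simp
        try ring
      · have h1 : sgen p q k 3 (1+2) = (genU p q k)^3 := sgen_self p q k 3
        rw [h1, rhs3]
        simp only [show (1:ℕ)+1 = 2 from rfl, show (1:ℕ)+2 = 3 from rfl]
        have w0 : genU p q (k*0) = 0 := genU0 p q
        have w1 : genU p q (k*1) = genU p q k := by rw [Nat.mul_one]
        have w2 : genU p q (k*2) = genV p q k * genU p q (k*1) - q^k * genU p q (k*0) := urec p q k hk 0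
        have w3 : genU p q (k*3) = genV p q k * genU p q (k*2) - q^k * genU p q (k*1) := urec p q k hk 1
        rw [w3, w2, w1, w0]
        push_cast
        field_simp
        try ring
    | succ m ih =>
      refine ⟨ih.2, ?_⟩
      simp only [show m+1+1 = m+2 from rfl]
      have hs : sgen p q k 3 (m+2+2) = genV p q k * sgen p q k 3 (m+1+2)
          - q^k * sgen p q k 3 (m+2) + genU p q k * sgen p q k 2 (m+1+2) :=
        srec p q k hk 2 (m+2)
      have hprev : sgen p q k 2 (m+1+2) = rhs2 p q k (m+2) :=
        closed2 p q k hk hV (m+2)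
      rw [hs, ih.1, ih.2, hprev]
      simp only [rhs3, rhs2]
      simp only [show m+1+1 = m+2 from rfl, show m+1+2 = m+3 from rfl, show m+2+1 = m+3 from rfl, show m+2+2 = m+4 from rfl]
      have u4 : genU p q (k*(m+4)) = genV p q k * genU p q (k*(m+3)) - q^k * genU p q (k*(m+2)) := urec p q k hk (m+2)
      have u3 : genU p q (k*(m+3)) = genV p q k * genU p q (k*(m+2)) - q^k * genU p q (k*(m+1)) := urec p q k hk (m+1)
      have u2 : genU p q (k*(m+2)) = genV p q k * genU p q (k*(m+1)) - q^k * genU p q (k*m) := urec p q k hk (m)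
      rw [u4, u3, u2]
      push_cast
      field_simp
      ring
  exact fun m => (key m).1

lemma closed4 (hk : 1 ≤ k) (hV : (genV p q k)^2 - 4*q^k ≠ 0) :
    ∀ m : ℕ, sgen p q k 4 (m+3) = rhs4 p q k m := by
  have key : ∀ m : ℕ, (sgen p q k 4 (m+3) = rhs4 p q k m) ∧
      (sgen p q k 4 (m+1+3) = rhs4 p q k (m+1)) := by
    intro m
    induction m with
    | zero =>
      simp only [Nat.zero_add]
      constructor
      · have h0 : sgen p q k 4 3 = 0 := sgen_eq_zero p q k (by omega)
        rw [h0, rhs4]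
        simp only [Nat.zero_add]
        have w0 : genU p q (k*0) = 0 := genU0 p q
        have w1 : genU p q (k*1) = genU p q k := by rw [Nat.mul_one]
        have w2 : genU p q (k*2) = genV p q k * genU p q (k*1) - q^k * genU p q (k*0) := urec p q k hk 0
        have w3 : genU p q (k*3) = genV p q k * genU p q (k*2) - q^k * genU p q (k*1) := urec p q k hk 1
        rw [w3, w2, w1, w0]
        push_cast
        field_simp
        try ring
      · have h1 : sgen p q k 4 (1+3) = (genU p q k)^4 := sgen_self p q k 4
        rw [h1, rhs4]
        simp only [show (1:ℕ)+1 = 2 from rfl, show (1:ℕ)+2 = 3 from rfl, show (1:ℕ)+3 = 4 from rfl]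
        have w0 : genU p q (k*0) = 0 := genU0 p q
        have w1 : genU p q (k*1) = genU p q k := by rw [Nat.mul_one]
        have w2 : genU p q (k*2) = genV p q k * genU p q (k*1) - q^k * genU p q (k*0) := urec p q k hk 0
        have w3 : genU p q (k*3) = genV p q k * genU p q (k*2) - q^k * genU p q (k*1) := urec p q k hk 1
        have w4 : genU p q (k*4) = genV p q k * genU p q (k*3) - q^k * genU p q (k*2) := urec p q k hk 2
        rw [w4, w3, w2, w1, w0]
        push_cast
        field_simp
        try ring
    | succ m ih =>
      refine ⟨ih.2, ?_⟩
      simp only [show m+1+1 = m+2 from rfl]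
      have hs : sgen p q k 4 (m+2+3) = genV p q k * sgen p q k 4 (m+1+3)
          - q^k * sgen p q k 4 (m+3) + genU p q k * sgen p q k 3 (m+1+3) :=
        srec p q k hk 3 (m+3)
      have hprev : sgen p q k 3 (m+1+3) = rhs3 p q k (m+2) :=
        closed3 p q k hk hV (m+2)
      rw [hs, ih.1, ih.2, hprev]
      simp only [rhs4, rhs3]
      simp only [show m+1+1 = m+2 from rfl, show m+1+2 = m+3 from rfl, show m+1+3 = m+4 from rfl, show m+2+1 = m+3 from rfl, show m+2+2 = m+4 from rfl, show m+2+3 = m+5 from rfl]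
      have u5 : genU p q (k*(m+5)) = genV p q k * genU p q (k*(m+4)) - q^k * genU p q (k*(m+3)) := urec p q k hk (m+3)
      have u4 : genU p q (k*(m+4)) = genV p q k * genU p q (k*(m+3)) - q^k * genU p q (k*(m+2)) := urec p q k hk (m+2)
      have u3 : genU p q (k*(m+3)) = genV p q k * genU p q (k*(m+2)) - q^k * genU p q (k*(m+1)) := urec p q k hk (m+1)
      have u2 : genU p q (k*(m+2)) = genV p q k * genU p q (k*(m+1)) - q^k * genU p q (k*m) := urec p q k hk (m)
      rw [u5, u4, u3, u2]
      push_cast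
      field_simp
      ring
  exact fun m => (key m).1

lemma closed5 (hk : 1 ≤ k) (hV : (genV p q k)^2 - 4*q^k ≠ 0) :
    ∀ m : ℕ, sgen p q k 5 (m+4) = rhs5 p q k m := by
  have key : ∀ m : ℕ, (sgen p q k 5 (m+4) = rhs5 p q k m) ∧
      (sgen p q k 5 (m+1+4) = rhs5 p q k (m+1)) := by
    intro m
    induction m with
    | zero =>
      simp only [Nat.zero_add]
      constructor
      · have h0 : sgen p q k 5 4 = 0 := sgen_eq_zero p q k (by omega)
        rw [h0, rhs5]
        simp only [Nat.zero_add]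
        have w0 : genU p q (k*0) = 0 := genU0 p q
        have w1 : genU p q (k*1) = genU p q k := by rw [Nat.mul_one]
        have w2 : genU p q (k*2) = genV p q k * genU p q (k*1) - q^k * genU p q (k*0) := urec p q k hk 0
        have w3 : genU p q (k*3) = genV p q k * genU p q (k*2) - q^k * genU p q (k*1) := urec p q k hk 1
        have w4 : genU p q (k*4) = genV p q k * genU p q (k*3) - q^k * genU p q (k*2) := urec p q k hk 2
        rw [w4, w3, w2, w1, w0]
        push_cast
        field_simp
        try ring
      · have h1 : sgen p q k 5 (1+4) = (genU p q k)^5 := sgen_self p q k 5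
        rw [h1, rhs5]
        simp only [show (1:ℕ)+1 = 2 from rfl, show (1:ℕ)+2 = 3 from rfl, show (1:ℕ)+3 = 4 from rfl, show (1:ℕ)+4 = 5 from rfl]
        have w0 : genU p q (k*0) = 0 := genU0 p q
        have w1 : genU p q (k*1) = genU p q k := by rw [Nat.mul_one]
        have w2 : genU p q (k*2) = genV p q k * genU p q (k*1) - q^k * genU p q (k*0) := urec p q k hk 0
        have w3 : genU p q (k*3) = genV p q k * genU p q (k*2) - q^k * genU p q (k*1) := urec p q k hk 1
        have w4 : genU p q (k*4) = genV p q k * genU p q (k*3) - q^k * genU p q (k*2) := urec p q k hk 2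
        have w5 : genU p q (k*5) = genV p q k * genU p q (k*4) - q^k * genU p q (k*3) := urec p q k hk 3
        rw [w5, w4, w3, w2, w1, w0]
        push_cast
        field_simp
        try ring
    | succ m ih =>
      refine ⟨ih.2, ?_⟩
      simp only [show m+1+1 = m+2 from rfl]
      have hs : sgen p q k 5 (m+2+4) = genV p q k * sgen p q k 5 (m+1+4)
          - q^k * sgen p q k 5 (m+4) + genU p q k * sgen p q k 4 (m+1+4) :=
        srec p q k hk 4 (m+4)
      have hprev : sgen p q k 4 (m+1+4) = rhs4 p q k (m+2) :=
        closed4 p q k hk hV (m+2)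
      rw [hs, ih.1, ih.2, hprev]
      simp only [rhs5, rhs4]
      simp only [show m+1+1 = m+2 from rfl, show m+1+2 = m+3 from rfl, show m+1+3 = m+4 from rfl, show m+1+4 = m+5 from rfl, show m+2+1 = m+3 from rfl, show m+2+2 = m+4 from rfl, show m+2+3 = m+5 from rfl, show m+2+4 = m+6 from rfl]
      have u6 : genU p q (k*(m+6)) = genV p q k * genU p q (k*(m+5)) - q^k * genU p q (k*(m+4)) := urec p q k hk (m+4)
      have u5 : genU p q (k*(m+5)) = genV p q k * genU p q (k*(m+4)) - q^k * genU p q (k*(m+3)) := urec p q k hk (m+3)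
      have u4 : genU p q (k*(m+4)) = genV p q k * genU p q (k*(m+3)) - q^k * genU p q (k*(m+2)) := urec p q k hk (m+2)
      have u3 : genU p q (k*(m+3)) = genV p q k * genU p q (k*(m+2)) - q^k * genU p q (k*(m+1)) := urec p q k hk (m+1)
      have u2 : genU p q (k*(m+2)) = genV p q k * genU p q (k*(m+1)) - q^k * genU p q (k*m) := urec p q k hk (m)
      rw [u6, u5, u4, u3, u2]
      push_cast
      field_simp
      ring
  exact fun m => (key m).1

lemma closed6 (hk : 1 ≤ k) (hV : (genV p q k)^2 - 4*q^k ≠ 0) :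
    ∀ m : ℕ, sgen p q k 6 (m+5) = rhs6 p q k m := by
  have key : ∀ m : ℕ, (sgen p q k 6 (m+5) = rhs6 p q k m) ∧
      (sgen p q k 6 (m+1+5) = rhs6 p q k (m+1)) := by
    intro m
    induction m with
    | zero =>
      simp only [Nat.zero_add]
      constructor
      · have h0 : sgen p q k 6 5 = 0 := sgen_eq_zero p q k (by omega)
        rw [h0, rhs6]
        simp only [Nat.zero_add]
        have w0 : genU p q (k*0) = 0 := genU0 p q
        have w1 : genU p q (k*1) = genU p q k := by rw [Nat.mul_one]
        have w2 : genU p q (k*2) = genV p q k * genU p q (k*1) - q^k * genU p q (k*0) := urec p q k hk 0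
        have w3 : genU p q (k*3) = genV p q k * genU p q (k*2) - q^k * genU p q (k*1) := urec p q k hk 1
        have w4 : genU p q (k*4) = genV p q k * genU p q (k*3) - q^k * genU p q (k*2) := urec p q k hk 2
        have w5 : genU p q (k*5) = genV p q k * genU p q (k*4) - q^k * genU p q (k*3) := urec p q k hk 3
        rw [w5, w4, w3, w2, w1, w0]
        push_cast
        field_simp
        try ring
      · have h1 : sgen p q k 6 (1+5) = (genU p q k)^6 := sgen_self p q k 6
        rw [h1, rhs6]
        simp only [show (1:ℕ)+1 = 2 from rfl, show (1:ℕ)+2 = 3 from rfl, show (1:ℕ)+3 = 4 from rfl, show (1:ℕ)+4 = 5 from rfl, show (1:ℕ)+5 = 6 from rfl]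
        have w0 : genU p q (k*0) = 0 := genU0 p q
        have w1 : genU p q (k*1) = genU p q k := by rw [Nat.mul_one]
        have w2 : genU p q (k*2) = genV p q k * genU p q (k*1) - q^k * genU p q (k*0) := urec p q k hk 0
        have w3 : genU p q (k*3) = genV p q k * genU p q (k*2) - q^k * genU p q (k*1) := urec p q k hk 1
        have w4 : genU p q (k*4) = genV p q k * genU p q (k*3) - q^k * genU p q (k*2) := urec p q k hk 2
        have w5 : genU p q (k*5) = genV p q k * genU p q (k*4) - q^k * genU p q (k*3) := urec p q k hk 3
        have w6 : genU p q (k*6) = genV p q k * genU p q (k*5) - q^k * genU p q (k*4) := urec p q k hk 4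
        rw [w6, w5, w4, w3, w2, w1, w0]
        push_cast
        field_simp
        try ring
    | succ m ih =>
      refine ⟨ih.2, ?_⟩
      simp only [show m+1+1 = m+2 from rfl]
      have hs : sgen p q k 6 (m+2+5) = genV p q k * sgen p q k 6 (m+1+5)
          - q^k * sgen p q k 6 (m+5) + genU p q k * sgen p q k 5 (m+1+5) :=
        srec p q k hk 5 (m+5)
      have hprev : sgen p q k 5 (m+1+5) = rhs5 p q k (m+2) :=
        closed5 p q k hk hV (m+2)
      rw [hs, ih.1, ih.2, hprev]
      simp only [rhs6, rhs5]
      simp only [show m+1+1 = m+2 from rfl, show m+1+2 = m+3 from rfl, show m+1+3 = m+4 from rfl, show m+1+4 = m+5 from rfl, show m+1+5 = m+6 from rfl, show m+2+1 = m+3 from rfl, show m+2+2 = m+4 from rfl, show m+2+3 = m+5 from rfl, show m+2+4 = m+6 from rfl, show m+2+5 = m+7 from rfl]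
      have u7 : genU p q (k*(m+7)) = genV p q k * genU p q (k*(m+6)) - q^k * genU p q (k*(m+5)) := urec p q k hk (m+5)
      have u6 : genU p q (k*(m+6)) = genV p q k * genU p q (k*(m+5)) - q^k * genU p q (k*(m+4)) := urec p q k hk (m+4)
      have u5 : genU p q (k*(m+5)) = genV p q k * genU p q (k*(m+4)) - q^k * genU p q (k*(m+3)) := urec p q k hk (m+3)
      have u4 : genU p q (k*(m+4)) = genV p q k * genU p q (k*(m+3)) - q^k * genU p q (k*(m+2)) := urec p q k hk (m+2)
      have u3 : genU p q (k*(m+3)) = genV p q k * genU p q (k*(m+2)) - q^k * genU p q (k*(m+1)) := urec p q k hk (m+1)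
      have u2 : genU p q (k*(m+2)) = genV p q k * genU p q (k*(m+1)) - q^k * genU p q (k*m) := urec p q k hk (m)
      rw [u7, u6, u5, u4, u3, u2]
      push_cast
      field_simp
      ring
  exact fun m => (key m).1
end

/-- The closed form for `s_6(n; p, q; k)`. -/
theorem stmt_9 (p q : ℝ) (k : ℕ) (hk : 1 ≤ k)
    (hV : (genV p q k) ^ 2 - 4 * q ^ k ≠ 0) (n : ℕ) (hn : 5 ≤ n) :
    sgen p q k 6 n =
      (genU p q k) ^ 5 / (120 * ((genV p q k) ^ 2 - 4 * q ^ k) ^ 5) *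
        ((genV p q k) ^ 5 * ((n : ℝ) - 1) * ((n : ℝ) - 2) * ((n : ℝ) - 3) * ((n : ℝ) - 4) *
            ((n : ℝ) - 5) * genU p q (n * k)
          - 10 * q ^ k * (genV p q k) ^ 4 * ((n : ℝ) - 2) * ((n : ℝ) - 3) * ((n : ℝ) - 4) *
              ((n : ℝ) - 5) * ((n : ℝ) + 2) * genU p q ((n - 1) * k)
          + 20 * q ^ (2 * k) * (genV p q k) ^ 3 * ((n : ℝ) - 3) * ((n : ℝ) - 4) * ((n : ℝ) - 5) *
              (2 * (n : ℝ) ^ 2 + 6 * (n : ℝ) + 1) * genU p q ((n - 2) * k)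
          - 40 * q ^ (3 * k) * (genV p q k) ^ 2 * ((n : ℝ) - 4) * ((n : ℝ) - 5) * ((n : ℝ) + 1) *
              (2 * (n : ℝ) ^ 2 + 4 * (n : ℝ) - 9) * genU p q ((n - 3) * k)
          + 80 * q ^ (4 * k) * genV p q k * ((n : ℝ) - 5) *
              ((n : ℝ) ^ 4 + 2 * (n : ℝ) ^ 3 - 10 * (n : ℝ) ^ 2 - 11 * (n : ℝ) + 9) *
              genU p q ((n - 4) * k)
          - 32 * q ^ (5 * k) * (n : ℝ) * ((n : ℝ) - 4) * ((n : ℝ) - 2) * ((n : ℝ) + 2) *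
              ((n : ℝ) + 4) * genU p q ((n - 5) * k)) := by
  obtain ⟨m, rfl⟩ : ∃ m, n = m + 5 := ⟨n - 5, by omega⟩
  have h := closed6 p q k hk hV m
  rw [show (m+5)*k = k*(m+5) from Nat.mul_comm _ _] 
  rw [h, rhs6]
  simp only [show m+5-1 = m+4 from by omega, show m+5-2 = m+3 from by omega, show m+5-3 = m+2 from by omega, show m+5-4 = m+1 from by omega, show m+5-5 = m from by omega]
  simp only [show (m+1)*k = k*(m+1) from Nat.mul_comm _ _, show (m+2)*k = k*(m+2) from Nat.mul_comm _ _, show (m+3)*k = k*(m+3) from Nat.mul_comm _ _, show (m+4)*k = k*(m+4) from Nat.mul_comm _ _, show m*k = k*m from Nat.mul_comm _ _, show 2*k = k*2 from Nat.mul_comm _ _, show 3*k = k*3 from Nat.mul_comm _ _, show 4*k = k*4 from Nat.mul_comm _ _, show 5*k = k*5 from Nat.mul_comm _ _]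
  simp only [pow_mul]
  push_cast
  congr 1
  ring
end

section
/- For every integer n ≥ 5, Σ over all 6-tuples (a,b,c,d,e,f) of nonnegative integers with a + b + c + d + e + f = n of F_a·F_b·F_c·F_d·F_e·F_f equals (1/(5!·5⁴))·((n−1)(5n⁴−70n³−65n²+490n+264)·F_n + 2n(5n⁴+5n²−226)·F_{n−1}), where F_m denotes the m-th Fibonacci number. -/
open Finset PowerSeries

lemma tuple_succ (f : ℕ → ℚ) (k n : ℕ) :
    ∑ t ∈ Finset.Nat.antidiagonalTuple (k+1) n, ∏ i, f (t i)
      = ∑ p ∈ Finset.HasAntidiagonal.antidiagonal n, f p.1 *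
          ∑ t ∈ Finset.Nat.antidiagonalTuple k p.2, ∏ i, f (t i) := by
  simp_rw [Finset.mul_sum]
  rw [Finset.sum_sigma']
  refine Finset.sum_nbij' (fun t => ⟨(t 0, ∑ i : Fin k, t i.succ), Fin.tail t⟩)
    (fun x => Fin.cons x.1.1 x.2) ?_ ?_ ?_ ?_ ?_
  · intro t ht
    simp only [Finset.Nat.mem_antidiagonalTuple] at ht
    simp only [Finset.mem_sigma, Finset.HasAntidiagonal.mem_antidiagonal,
      Finset.Nat.mem_antidiagonalTuple, Fin.tail]
    exact ⟨by rw [← ht, Fin.sum_univ_succ], trivial⟩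
  · rintro ⟨⟨a, b⟩, t⟩ h
    simp only [Finset.mem_sigma, Finset.HasAntidiagonal.mem_antidiagonal,
      Finset.Nat.mem_antidiagonalTuple] at h ⊢
    rw [Fin.sum_cons, h.2, h.1]
  · intro t ht
    simp [Fin.cons_self_tail]
  · rintro ⟨⟨a, b⟩, t⟩ h
    simp only [Finset.mem_sigma, Finset.HasAntidiagonal.mem_antidiagonal,
      Finset.Nat.mem_antidiagonalTuple] at h
    simp only [Fin.cons_zero, Fin.tail_cons]
    congr 1
    rw [Prod.mk.injEq]
    refine ⟨rfl, ?_⟩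
    simp only [Fin.cons_succ]
    exact h.2
  · intro t ht
    rw [Fin.prod_univ_succ]
    rfl

noncomputable def Fq : ℚ⟦X⟧ := PowerSeries.mk fun n => (Nat.fib n : ℚ)

lemma coeff_Fq_pow (k n : ℕ) :
    coeff n (Fq ^ k) = ∑ t ∈ Finset.Nat.antidiagonalTuple k n, ∏ i, (Nat.fib (t i) : ℚ) := by
  induction k generalizing n with
  | zero =>
    cases n with
    | zero => simp
    | succ n => simp [coeff_one]
  | succ k ih =>
    rw [pow_succ', coeff_mul, tuple_succ (fun m => (Nat.fib m : ℚ))]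
    refine Finset.sum_congr rfl fun p hp => ?_
    rw [ih, Fq, coeff_mk]

lemma fibrel : (1 - X - X^2 : ℚ⟦X⟧) * Fq = X := by
  ext n
  rw [sub_mul, sub_mul, one_mul, map_sub, map_sub]
  match n with
  | 0 => simp [Fq, coeff_mk]
  | 1 =>
    rw [coeff_X_pow_mul' (n := 2), ← pow_one (X : ℚ⟦X⟧), coeff_X_pow_mul']
    simp [Fq, coeff_mk]
  | (n+2) =>
    rw [coeff_X_pow_mul' (n := 2), ← pow_one (X : ℚ⟦X⟧), coeff_X_pow_mul']
    simp only [Fq, coeff_mk, pow_one, if_pos (by omega : 1 ≤ n + 2), if_pos (by omega : 2 ≤ n + 2)]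
    rw [show n + 2 - 1 = n + 1 by omega, show n + 2 - 2 = n by omega,
      Nat.fib_add_two, coeff_X]
    push_cast
    ring

noncomputable def T (n : ℕ) : ℚ := coeff n (Fq ^ 6)

noncomputable def W (n j : ℕ) : ℚ := if j ≤ n then T (n - j) else 0

noncomputable def Rf (n : ℕ) : ℚ :=
  (1 / (Nat.factorial 5 * 5 ^ 4) : ℚ) *
    (((n : ℚ) - 1) *
        (5 * (n : ℚ) ^ 4 - 70 * (n : ℚ) ^ 3 - 65 * (n : ℚ) ^ 2 + 490 * (n : ℚ) + 264) *
        (Nat.fib n : ℚ)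
      + 2 * (n : ℚ) * (5 * (n : ℚ) ^ 4 + 5 * (n : ℚ) ^ 2 - 226) *
        (Nat.fib (n - 1) : ℚ))

lemma coeffmain (n : ℕ) :
    (coeff n (X^6 : ℚ⟦X⟧)) + 6 * W n 1 + 30 * W n 4 + 6 * W n 5 + 30 * W n 8 + 10 * W n 9
      = T n + 9 * W n 2 + 10 * W n 3 + 41 * W n 6 + 6 * W n 7 + 9 * W n 10 + 6 * W n 11 + W n 12 := by
  have main : (1 - X - X^2 : ℚ⟦X⟧)^6 * Fq^6 = X^6 := by rw [← mul_pow, fibrel]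
  have expand : (1 - X - X^2 : ℚ⟦X⟧)^6 * Fq^6
      + ((6:ℚ) • (X^1 * Fq^6) + (30:ℚ) • (X^4 * Fq^6) + (6:ℚ) • (X^5 * Fq^6)
        + (30:ℚ) • (X^8 * Fq^6) + (10:ℚ) • (X^9 * Fq^6))
      = Fq^6 + ((9:ℚ) • (X^2 * Fq^6) + (10:ℚ) • (X^3 * Fq^6) + (41:ℚ) • (X^6 * Fq^6)
        + (6:ℚ) • (X^7 * Fq^6) + (9:ℚ) • (X^10 * Fq^6) + (6:ℚ) • (X^11 * Fq^6)
        + X^12 * Fq^6) := by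
    simp only [smul_eq_C_mul, map_ofNat]
    ring
  rw [main] at expand
  have h := congrArg (coeff n) expand
  simp only [map_add, map_smul, coeff_X_pow_mul', smul_eq_mul] at h
  simp only [W, T]
  linear_combination h


lemma Tv0 : T 0 = 0 := by
  have h := coeffmain 0
  norm_num [W, coeff_X_pow] at h
  linarith 


lemma Tv1 : T 1 = 0 := by
  have h := coeffmain 1
  norm_num [W, coeff_X_pow] at h
  linarith [Tv0]


lemma Tv2 : T 2 = 0 := by
  have h := coeffmain 2
  norm_num [W, coeff_X_pow] at h
  linarith [Tv0, Tv1]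


lemma Tv3 : T 3 = 0 := by
  have h := coeffmain 3
  norm_num [W, coeff_X_pow] at h
  linarith [Tv0, Tv1, Tv2]


lemma Tv4 : T 4 = 0 := by
  have h := coeffmain 4
  norm_num [W, coeff_X_pow] at h
  linarith [Tv0, Tv1, Tv2, Tv3]


lemma Tv5 : T 5 = 0 := by
  have h := coeffmain 5
  norm_num [W, coeff_X_pow] at h
  linarith [Tv0, Tv1, Tv2, Tv3, Tv4]


lemma Tv6 : T 6 = 1 := by
  have h := coeffmain 6
  norm_num [W, coeff_X_pow] at h
  linarith [Tv0, Tv1, Tv2, Tv3, Tv4, Tv5]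


lemma Tv7 : T 7 = 6 := by
  have h := coeffmain 7
  norm_num [W, coeff_X_pow] at h
  linarith [Tv0, Tv1, Tv2, Tv3, Tv4, Tv5, Tv6]


lemma Tv8 : T 8 = 27 := by
  have h := coeffmain 8
  norm_num [W, coeff_X_pow] at h
  linarith [Tv0, Tv1, Tv2, Tv3, Tv4, Tv5, Tv6, Tv7]


lemma Tv9 : T 9 = 98 := by
  have h := coeffmain 9
  norm_num [W, coeff_X_pow] at h
  linarith [Tv0, Tv1, Tv2, Tv3, Tv4, Tv5, Tv6, Tv7, Tv8]


lemma Tv10 : T 10 = 315 := by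
  have h := coeffmain 10
  norm_num [W, coeff_X_pow] at h
  linarith [Tv0, Tv1, Tv2, Tv3, Tv4, Tv5, Tv6, Tv7, Tv8, Tv9]


lemma Tv11 : T 11 = 924 := by
  have h := coeffmain 11
  norm_num [W, coeff_X_pow] at h
  linarith [Tv0, Tv1, Tv2, Tv3, Tv4, Tv5, Tv6, Tv7, Tv8, Tv9, Tv10]


lemma Tv12 : T 12 = 2534 := by
  have h := coeffmain 12
  norm_num [W, coeff_X_pow] at h
  linarith [Tv0, Tv1, Tv2, Tv3, Tv4, Tv5, Tv6, Tv7, Tv8, Tv9, Tv10, Tv11]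


lemma Tv13 : T 13 = 6588 := by
  have h := coeffmain 13
  norm_num [W, coeff_X_pow] at h
  linarith [Tv0, Tv1, Tv2, Tv3, Tv4, Tv5, Tv6, Tv7, Tv8, Tv9, Tv10, Tv11, Tv12]


lemma Tv14 : T 14 = 16407 := by
  have h := coeffmain 14
  norm_num [W, coeff_X_pow] at h
  linarith [Tv0, Tv1, Tv2, Tv3, Tv4, Tv5, Tv6, Tv7, Tv8, Tv9, Tv10, Tv11, Tv12, Tv13]


lemma Tv15 : T 15 = 39430 := by
  have h := coeffmain 15
  norm_num [W, coeff_X_pow] at h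
  linarith [Tv0, Tv1, Tv2, Tv3, Tv4, Tv5, Tv6, Tv7, Tv8, Tv9, Tv10, Tv11, Tv12, Tv13, Tv14]


lemma Tv16 : T 16 = 91959 := by
  have h := coeffmain 16
  norm_num [W, coeff_X_pow] at h
  linarith [Tv0, Tv1, Tv2, Tv3, Tv4, Tv5, Tv6, Tv7, Tv8, Tv9, Tv10, Tv11, Tv12, Tv13, Tv14, Tv15]


lemma rec6 (m : ℕ) : T (m+12) = 6*T (m+11) - 9*T (m+10) - 10*T (m+9) + 30*T (m+8) + 6*T (m+7)
    - 41*T (m+6) - 6*T (m+5) + 30*T (m+4) + 10*T (m+3) - 9*T (m+2) - 6*T (m+1) - T m := by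
  have w : ∀ jv d : ℕ, jv + d = m + 12 → W (m+12) d = T jv := by
    intro jv d h
    rw [W, if_pos (by omega), show m+12-d = jv by omega]
  have h := coeffmain (m+12)
  rw [w (m+11) 1 (by omega), w (m+8) 4 (by omega), w (m+7) 5 (by omega), w (m+4) 8 (by omega), w (m+3) 9 (by omega), w (m+10) 2 (by omega), w (m+9) 3 (by omega), w (m+6) 6 (by omega), w (m+5) 7 (by omega), w (m+2) 10 (by omega), w (m+1) 11 (by omega), w (m) 12 (by omega), coeff_X_pow, if_neg (by omega)] at h
  linarith


lemma key5 : ∀ k : ℕ, T (k+5) = Rf (k+5) := by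
  intro k
  induction k using Nat.strong_induction_on with
  | _ k ih =>
    rcases Nat.lt_or_ge k 12 with hk | hk
    · interval_cases k
      · show T 5 = Rf 5
        rw [Tv5, Rf]
        norm_num [Nat.factorial, Nat.fib]
      · show T 6 = Rf 6
        rw [Tv6, Rf]
        norm_num [Nat.factorial, Nat.fib]
      · show T 7 = Rf 7
        rw [Tv7, Rf]
        norm_num [Nat.factorial, Nat.fib]
      · show T 8 = Rf 8
        rw [Tv8, Rf]
        norm_num [Nat.factorial, Nat.fib]
      · show T 9 = Rf 9
        rw [Tv9, Rf]
        norm_num [Nat.factorial, Nat.fib]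
      · show T 10 = Rf 10
        rw [Tv10, Rf]
        norm_num [Nat.factorial, Nat.fib]
      · show T 11 = Rf 11
        rw [Tv11, Rf]
        norm_num [Nat.factorial, Nat.fib]
      · show T 12 = Rf 12
        rw [Tv12, Rf]
        norm_num [Nat.factorial, Nat.fib]
      · show T 13 = Rf 13
        rw [Tv13, Rf]
        norm_num [Nat.factorial, Nat.fib]
      · show T 14 = Rf 14
        rw [Tv14, Rf]
        norm_num [Nat.factorial, Nat.fib]
      · show T 15 = Rf 15
        rw [Tv15, Rf]
        norm_num [Nat.factorial, Nat.fib]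
      · show T 16 = Rf 16
        rw [Tv16, Rf]
        norm_num [Nat.factorial, Nat.fib]
    obtain ⟨j, rfl⟩ : ∃ j, k = j + 12 := ⟨k - 12, by omega⟩
    have h16 : T (j+16) = Rf (j+16) := by
      have := ih (j+11) (by omega)
      rwa [show j+11+5 = j+16 by omega] at this
    have h15 : T (j+15) = Rf (j+15) := by
      have := ih (j+10) (by omega)
      rwa [show j+10+5 = j+15 by omega] at this
    have h14 : T (j+14) = Rf (j+14) := by
      have := ih (j+9) (by omega)
      rwa [show j+9+5 = j+14 by omega] at this
    have h13 : T (j+13) = Rf (j+13) := by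
      have := ih (j+8) (by omega)
      rwa [show j+8+5 = j+13 by omega] at this
    have h12 : T (j+12) = Rf (j+12) := by
      have := ih (j+7) (by omega)
      rwa [show j+7+5 = j+12 by omega] at this
    have h11 : T (j+11) = Rf (j+11) := by
      have := ih (j+6) (by omega)
      rwa [show j+6+5 = j+11 by omega] at this
    have h10 : T (j+10) = Rf (j+10) := by
      have := ih (j+5) (by omega)
      rwa [show j+5+5 = j+10 by omega] at this
    have h9 : T (j+9) = Rf (j+9) := by
      have := ih (j+4) (by omega)
      rwa [show j+4+5 = j+9 by omega] at this
    have h8 : T (j+8) = Rf (j+8) := by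
      have := ih (j+3) (by omega)
      rwa [show j+3+5 = j+8 by omega] at this
    have h7 : T (j+7) = Rf (j+7) := by
      have := ih (j+2) (by omega)
      rwa [show j+2+5 = j+7 by omega] at this
    have h6 : T (j+6) = Rf (j+6) := by
      have := ih (j+1) (by omega)
      rwa [show j+1+5 = j+6 by omega] at this
    have h5 : T (j+5) = Rf (j+5) := by
      have := ih (j+0) (by omega)
      rwa [show j+0+5 = j+5 by omega] at this
    have h := rec6 (j+5)
    rw [show j+5+12 = j+17 by omega, show j+5+11 = j+16 by omega, show j+5+10 = j+15 by omega, show j+5+9 = j+14 by omega, show j+5+8 = j+13 by omega, show j+5+7 = j+12 by omega, show j+5+6 = j+11 by omega, show j+5+5 = j+10 by omega, show j+5+4 = j+9 by omega, show j+5+3 = j+8 by omega, show j+5+2 = j+7 by omega, show j+5+1 = j+6 by omega, show j+5+0 = j+5 by omega] at h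
    rw [show j+12+5 = j+17 by omega, h, h16, h15, h14, h13, h12, h11, h10, h9, h8, h7, h6, h5]
    simp only [Rf]
    rw [show j+17-1 = j+16 by omega, show j+16-1 = j+15 by omega, show j+15-1 = j+14 by omega, show j+14-1 = j+13 by omega, show j+13-1 = j+12 by omega, show j+12-1 = j+11 by omega, show j+11-1 = j+10 by omega, show j+10-1 = j+9 by omega, show j+9-1 = j+8 by omega, show j+8-1 = j+7 by omega, show j+7-1 = j+6 by omega, show j+6-1 = j+5 by omega, show j+5-1 = j+4 by omega]
    have f17 : (Nat.fib (j+17) : ℚ) = Nat.fib (j+16) + Nat.fib (j+15) := by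
      rw [show j+17 = (j+15)+2 by omega, Nat.fib_add_two]
      push_cast
      ring
    have f16 : (Nat.fib (j+16) : ℚ) = Nat.fib (j+15) + Nat.fib (j+14) := by
      rw [show j+16 = (j+14)+2 by omega, Nat.fib_add_two]
      push_cast
      ring
    have f15 : (Nat.fib (j+15) : ℚ) = Nat.fib (j+14) + Nat.fib (j+13) := by
      rw [show j+15 = (j+13)+2 by omega, Nat.fib_add_two]
      push_cast
      ring
    have f14 : (Nat.fib (j+14) : ℚ) = Nat.fib (j+13) + Nat.fib (j+12) := by
      rw [show j+14 = (j+12)+2 by omega, Nat.fib_add_two]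
      push_cast
      ring
    have f13 : (Nat.fib (j+13) : ℚ) = Nat.fib (j+12) + Nat.fib (j+11) := by
      rw [show j+13 = (j+11)+2 by omega, Nat.fib_add_two]
      push_cast
      ring
    have f12 : (Nat.fib (j+12) : ℚ) = Nat.fib (j+11) + Nat.fib (j+10) := by
      rw [show j+12 = (j+10)+2 by omega, Nat.fib_add_two]
      push_cast
      ring
    have f11 : (Nat.fib (j+11) : ℚ) = Nat.fib (j+10) + Nat.fib (j+9) := by
      rw [show j+11 = (j+9)+2 by omega, Nat.fib_add_two]
      push_cast
      ring
    have f10 : (Nat.fib (j+10) : ℚ) = Nat.fib (j+9) + Nat.fib (j+8) := by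
      rw [show j+10 = (j+8)+2 by omega, Nat.fib_add_two]
      push_cast
      ring
    have f9 : (Nat.fib (j+9) : ℚ) = Nat.fib (j+8) + Nat.fib (j+7) := by
      rw [show j+9 = (j+7)+2 by omega, Nat.fib_add_two]
      push_cast
      ring
    have f8 : (Nat.fib (j+8) : ℚ) = Nat.fib (j+7) + Nat.fib (j+6) := by
      rw [show j+8 = (j+6)+2 by omega, Nat.fib_add_two]
      push_cast
      ring
    have f7 : (Nat.fib (j+7) : ℚ) = Nat.fib (j+6) + Nat.fib (j+5) := by
      rw [show j+7 = (j+5)+2 by omega, Nat.fib_add_two]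
      push_cast
      ring
    have f6 : (Nat.fib (j+6) : ℚ) = Nat.fib (j+5) + Nat.fib (j+4) := by
      rw [show j+6 = (j+4)+2 by omega, Nat.fib_add_two]
      push_cast
      ring
    rw [f17, f16, f15, f14, f13, f12, f11, f10, f9, f8, f7, f6]
    have hfact : (Nat.factorial 5 : ℚ) = 120 := by norm_num [Nat.factorial]
    rw [hfact]
    push_cast
    ring


/-- `∑_{a+b+c+d+e+f=n} F_a F_b F_c F_d F_e F_f
= (1/(5!·5⁴)) ((n-1)(5n⁴-70n³-65n²+490n+264) F_n + 2n(5n⁴+5n²-226) F_{n-1})` for `n ≥ 5`. -/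
theorem stmt_14 (n : ℕ) (hn : 5 ≤ n) :
    ∑ t ∈ Finset.Nat.antidiagonalTuple 6 n, ∏ i, (Nat.fib (t i) : ℚ) =
      (1 / (Nat.factorial 5 * 5 ^ 4) : ℚ) *
        (((n : ℚ) - 1) *
            (5 * (n : ℚ) ^ 4 - 70 * (n : ℚ) ^ 3 - 65 * (n : ℚ) ^ 2 + 490 * (n : ℚ) + 264) *
            (Nat.fib n : ℚ)
          + 2 * (n : ℚ) * (5 * (n : ℚ) ^ 4 + 5 * (n : ℚ) ^ 2 - 226) *
            (Nat.fib (n - 1) : ℚ)) := by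
  obtain ⟨k, rfl⟩ : ∃ k, n = k + 5 := ⟨n - 5, by omega⟩
  rw [← coeff_Fq_pow]
  exact key5 k
end
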